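/- arXiv:2501.07693 — 6 statements merged into one kernel-verified Lean document; each statement's English description precedes it below -/
import Mathlib

section
/- Let A ⊆ ℝⁿ be a nonempty closed bounded set and let r > 0. Then A is r-strongly convex if and only if A is convex and for every x ∈ E_r(A) the set far_A(x) of farthest points of A from x is a singleton, where E_r(A) := {x ∈ ℝⁿ : there exists a ∈ A with ‖x − a‖ > r}. -/
open scoped RealInnerProductSpace

variable {E : Type*} [NormedAddCommGroup E] [InnerProductSpace ℝ E]

/-- The proximal normal cone to `A` at `a`. -/
def proxNormalCone (A : Set E) (a : E) : Set E :=
  {ζ : E | ∃ σ : ℝ, 0 ≤ σ ∧ ∀ x ∈ A, ⟪ζ, x - a⟫ ≤ σ * ‖x - a‖ ^ 2}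

/-- `A` is `r`-strongly convex: it is the intersection of a nonempty family of
closed balls of radius `r`. -/
def IsStronglyConvex (r : ℝ) (A : Set E) : Prop :=
  ∃ C : Set E, C.Nonempty ∧ A = ⋂ c ∈ C, Metric.closedBall c r

/-- `A` is `r`-spherically supported. -/
def IsSphericallySupported (r : ℝ) (A : Set E) : Prop :=
  ∀ a ∈ frontier A, ∃ ζ ∈ proxNormalCone A a, ζ ≠ 0 ∧
    ∀ x ∈ A, ⟪‖ζ‖⁻¹ • ζ, x - a⟫ ≤ -(1 / (2 * r)) * ‖x - a‖ ^ 2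

/-- `A` is epi-Lipschitz (wedged). -/
def IsEpiLipschitz (A : Set E) : Prop :=
  ∀ a ∈ frontier A, ∃ v : E, ∃ ε : ℝ, 0 < ε ∧
    ∀ a' ∈ A, ‖a' - a‖ < ε → ∀ t : ℝ, 0 ≤ t → t < ε →
      ∀ w : E, ‖w - v‖ < ε → a' + t • w ∈ A

/-- The set of farthest points of `A` from `x`. -/
def farPoints (A : Set E) (x : E) : Set E :=
  {a : E | a ∈ A ∧ ∀ b ∈ A, ‖x - b‖ ≤ ‖x - a‖}

/-- `E_r(A)`: the set of points whose farthest distance to `A` exceeds `r`. -/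
def farExceeds (r : ℝ) (A : Set E) : Set E := {x : E | ∃ a ∈ A, r < ‖x - a‖}

/-- `A` is `r`-negatively `S`-convex. -/
def IsNegSConvex (r : ℝ) (S A : Set E) : Prop :=
  ¬ ∃ a ∈ frontier A, ∃ a' ∈ frontier A, a ≠ a' ∧
      ∃ ζ ∈ proxNormalCone A a, ‖ζ‖ = 1 ∧
        ∃ ζ' ∈ proxNormalCone A a', ‖ζ'‖ = 1 ∧
          ∃ t : ℝ, r < t ∧ ∃ t' : ℝ, r < t' ∧
            a - t • ζ = a' - t' • ζ' ∧ a - t • ζ ∈ S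

/-- `A` satisfies the exterior `r`-sphere condition. -/
def SatisfiesExtSphere (r : ℝ) (A : Set E) : Prop :=
  ∀ a ∈ frontier A, ∃ ζ ∈ proxNormalCone A a, ζ ≠ 0 ∧
    ∀ x ∈ A, ⟪‖ζ‖⁻¹ • ζ, x - a⟫ ≤ (1 / (2 * r)) * ‖x - a‖ ^ 2

/-- `A` is `r`-prox-regular. -/
def IsProxRegular (r : ℝ) (A : Set E) : Prop :=
  ∀ a ∈ frontier A, ∀ ζ ∈ proxNormalCone A a, ζ ≠ 0 →
    ∀ x ∈ A, ⟪‖ζ‖⁻¹ • ζ, x - a⟫ ≤ (1 / (2 * r)) * ‖x - a‖ ^ 2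

section AuxiliaryLemmas

open Filter Topology

/-- Elementary inequality about square roots used in the forward direction. -/
private lemma aux_sqrt_trick {r ρ q s1 L : ℝ} (hr : 0 < r) (hq : 0 < q) (hρ : r < ρ)
    (hs1 : 0 ≤ s1) (hs1sq : s1 ^ 2 = r ^ 2 - q) (hL : 0 ≤ L) (hLsq : L ^ 2 = ρ ^ 2 - q) :
    ρ < L + (r - s1) := by
  have h1 : s1 < r := by nlinarith
  have h2 : s1 < L := by nlinarith
  have h3 : (0 : ℝ) < ρ + L := by linarith
  have h5 : (0 : ℝ) < r - s1 := by linarith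
  have key : (ρ - L) * (ρ + L) = (r - s1) * (r + s1) := by linear_combination hs1sq - hLsq
  nlinarith [mul_lt_mul_of_pos_left (show r + s1 < ρ + L by linarith) h5, key, h3, h5]

/-- If `a` is the unique farthest point of `A` from `z`, and the farthest distance does not
decrease in the direction `w`, then `w` cannot make a negative inner product with `z - a`. -/
private lemma aux_no_descent {A : Set E} (hA : IsCompact A)
    {z a w : E} (hfar : farPoints A z = {a}) (hw : ⟪z - a, w⟫ < 0)
    (hge : ∀ t : ℝ, 0 < t → ∃ b ∈ A, ‖z - a‖ ≤ ‖z + t • w - b‖) : False := by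
  have haA : a ∈ farPoints A z := by rw [hfar]; exact Set.mem_singleton a
  obtain ⟨haA', hamax⟩ := haA
  have htpos : ∀ k : ℕ, (0 : ℝ) < 1 / ((k : ℝ) + 1) := fun k => by positivity
  choose bs hbsA hbs using fun k : ℕ => hge (1 / ((k : ℝ) + 1)) (htpos k)
  obtain ⟨b', hb'A, φ, hφ, hblim⟩ := hA.tendsto_subseq hbsA
  have htlim : Tendsto (fun k : ℕ => 1 / ((φ k : ℝ) + 1)) atTop (𝓝 0) :=
    tendsto_one_div_add_atTop_nhds_zero_nat.comp hφ.tendsto_atTop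
  have hnlim : Tendsto (fun k : ℕ => ‖z + (1 / ((φ k : ℝ) + 1)) • w - bs (φ k)‖) atTop
      (𝓝 ‖z - b'‖) := by
    have h1 : Tendsto (fun k : ℕ => z + (1 / ((φ k : ℝ) + 1)) • w - bs (φ k)) atTop
        (𝓝 (z + (0 : ℝ) • w - b')) :=
      (tendsto_const_nhds.add (htlim.smul_const w)).sub hblim
    simpa using h1.norm
  have hb'ge : ‖z - a‖ ≤ ‖z - b'‖ :=
    ge_of_tendsto hnlim (Filter.Eventually.of_forall fun k => hbs (φ k))
  have hb'far : b' ∈ farPoints A z := ⟨hb'A, fun c hc => le_trans (hamax c hc) hb'ge⟩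
  have hb'a : b' = a := by rw [hfar] at hb'far; exact hb'far
  have hinlim : Tendsto (fun k : ℕ => ⟪z - bs (φ k), w⟫) atTop (𝓝 ⟪z - b', w⟫) :=
    (tendsto_const_nhds.sub hblim).inner tendsto_const_nhds
  have hzlim : Tendsto (fun k : ℕ => -(1 / ((φ k : ℝ) + 1)) * ‖w‖ ^ 2 / 2) atTop (𝓝 0) := by
    have := (htlim.neg.mul_const (‖w‖ ^ 2)).div_const (2 : ℝ)
    simpa using this
  have hterm : ∀ k : ℕ, -(1 / ((φ k : ℝ) + 1)) * ‖w‖ ^ 2 / 2 ≤ ⟪z - bs (φ k), w⟫ := by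
    intro k
    set t : ℝ := 1 / ((φ k : ℝ) + 1) with htdef
    have ht : 0 < t := htpos (φ k)
    have h5 : ‖z - bs (φ k)‖ ≤ ‖z - bs (φ k) + t • w‖ := by
      have heq : z + t • w - bs (φ k) = z - bs (φ k) + t • w := by abel
      calc ‖z - bs (φ k)‖ ≤ ‖z - a‖ := hamax _ (hbsA (φ k))
        _ ≤ ‖z + t • w - bs (φ k)‖ := hbs (φ k)
        _ = ‖z - bs (φ k) + t • w‖ := by rw [heq]
    have h6 : ‖z - bs (φ k) + t • w‖ ^ 2
        = ‖z - bs (φ k)‖ ^ 2 + 2 * (t * ⟪z - bs (φ k), w⟫) + t ^ 2 * ‖w‖ ^ 2 := by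
      rw [norm_add_sq_real, real_inner_smul_right, norm_smul]
      rw [Real.norm_eq_abs, abs_of_pos ht]
      ring
    have h5sq : ‖z - bs (φ k)‖ ^ 2 ≤ ‖z - bs (φ k) + t • w‖ ^ 2 := by
      have := norm_nonneg (z - bs (φ k))
      nlinarith [h5]
    nlinarith [h5sq, h6, ht, sq_nonneg t]
  have hfinal : (0 : ℝ) ≤ ⟪z - b', w⟫ := le_of_tendsto_of_tendsto' hzlim hinlim hterm
  rw [hb'a] at hfinal
  linarith

end AuxiliaryLemmas

set_option maxHeartbeats 4000000 in
theorem statement_14 {n : ℕ} (A : Set (EuclideanSpace ℝ (Fin n)))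
    (hne : A.Nonempty) (hcl : IsClosed A) (hbd : Bornology.IsBounded A)
    (r : ℝ) (hr : 0 < r) :
    IsStronglyConvex r A ↔
      Convex ℝ A ∧ ∀ x ∈ farExceeds r A, ∃ a, farPoints A x = {a} := by
  have hA : IsCompact A := Metric.isCompact_of_isClosed_isBounded hcl hbd
  have hfarex : ∀ x : EuclideanSpace ℝ (Fin n), ∃ a ∈ A, ∀ b ∈ A, ‖x - b‖ ≤ ‖x - a‖ := by
    intro x
    obtain ⟨a, haA, hmax⟩ := hA.exists_isMaxOn hne
      ((continuous_const.sub continuous_id).norm.continuousOn :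
        ContinuousOn (fun b : EuclideanSpace ℝ (Fin n) => ‖x - b‖) A)
    exact ⟨a, haA, fun b hb => hmax hb⟩
  choose far hfarA hfarM using hfarex
  constructor
  · -- Forward direction
    rintro ⟨C, hCne, hAeq⟩
    constructor
    · rw [hAeq]
      exact convex_iInter fun c => convex_iInter fun _ => convex_closedBall c r
    · rintro x ⟨a₀, ha₀A, ha₀r⟩
      refine ⟨far x, ?_⟩
      have hfx : far x ∈ farPoints A x := ⟨hfarA x, hfarM x⟩
      have hρ0 : r < ‖x - far x‖ := lt_of_lt_of_le ha₀r (hfarM x a₀ ha₀A)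
      apply Set.eq_singleton_iff_unique_mem.mpr
      refine ⟨hfx, ?_⟩
      intro y hy
      by_contra hne2
      obtain ⟨hyA, hymax⟩ := hy
      obtain ⟨c₀, hc₀⟩ := hCne
      set a := far x with ha
      have haA2 : a ∈ A := hfarA x
      have hballs : ∀ b ∈ A, ∀ c ∈ C, ‖b - c‖ ≤ r := by
        intro b hb c hc
        have hb' : b ∈ ⋂ c ∈ C, Metric.closedBall c r := hAeq ▸ hb
        have := Set.mem_iInter₂.mp hb' c hc
        rwa [Metric.mem_closedBall, dist_eq_norm] at this
      set ρ := ‖x - a‖ with hρdef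
      have hρeq : ‖x - y‖ = ρ := le_antisymm (hfarM x y hyA) (hymax a haA2)
      set d := ‖a - y‖ with hd
      have hdpos : 0 < d := by
        rw [hd]
        exact norm_pos_iff.mpr (sub_ne_zero.mpr fun h => hne2 h.symm)
      have hq : 0 < (d / 2) ^ 2 := by positivity
      have hd2r : d ≤ 2 * r := by
        have h1 := hballs a haA2 c₀ hc₀
        have h2 := hballs y hyA c₀ hc₀
        calc d = ‖(a - c₀) - (y - c₀)‖ := by rw [hd]; congr 1; abel
          _ ≤ ‖a - c₀‖ + ‖y - c₀‖ := norm_sub_le _ _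
          _ ≤ 2 * r := by linarith
      have hqr : (d / 2) ^ 2 ≤ r ^ 2 := by nlinarith [hdpos]
      set m := (2 : ℝ)⁻¹ • (a + y) with hm
      have hmc : ∀ c ∈ C, ‖m - c‖ ^ 2 ≤ r ^ 2 - (d / 2) ^ 2 := by
        intro c hc
        have hac : ‖a - c‖ ≤ r := hballs a haA2 c hc
        have hyc : ‖y - c‖ ≤ r := hballs y hyA c hc
        have hmceq : m - c = (2 : ℝ)⁻¹ • ((a - c) + (y - c)) := by
          rw [hm]; module
        have hpar := parallelogram_law_with_norm ℝ (a - c) (y - c)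
        have hsub : (a - c) - (y - c) = a - y := by abel
        rw [hsub, ← hd] at hpar
        have hnorm2 : ‖m - c‖ = (2 : ℝ)⁻¹ * ‖(a - c) + (y - c)‖ := by
          rw [hmceq, norm_smul]; norm_num
        rw [hnorm2]
        nlinarith [hpar, hac, hyc, norm_nonneg (a - c), norm_nonneg (y - c)]
      have hxm : x - m = (2 : ℝ)⁻¹ • ((x - a) + (x - y)) := by
        rw [hm]; module
      have hpar2 := parallelogram_law_with_norm ℝ (x - a) (x - y)
      have hsub2 : (x - a) - (x - y) = y - a := by abel
      have hdrev : ‖y - a‖ = d := by rw [hd]; exact norm_sub_rev y a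
      rw [hsub2, hdrev, hρeq, ← hρdef] at hpar2
      have hnx : ‖x - m‖ = (2 : ℝ)⁻¹ * ‖(x - a) + (x - y)‖ := by
        rw [hxm, norm_smul]; norm_num
      have hLsq : ‖x - m‖ ^ 2 = ρ ^ 2 - (d / 2) ^ 2 := by
        rw [hnx]
        linear_combination (1 / 4 : ℝ) * hpar2
      set s1 := Real.sqrt (r ^ 2 - (d / 2) ^ 2) with hs1def
      have hs1sq : s1 ^ 2 = r ^ 2 - (d / 2) ^ 2 := Real.sq_sqrt (by linarith)
      have hs1nn : 0 ≤ s1 := Real.sqrt_nonneg _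
      have hρ2 : r ^ 2 < ρ ^ 2 := by nlinarith [hρ0, hr]
      have hL2pos : 0 < ‖x - m‖ ^ 2 := by rw [hLsq]; linarith
      have hLpos : 0 < ‖x - m‖ := by
        rcases (norm_nonneg (x - m)).lt_or_eq with h | h
        · exact h
        · exfalso; rw [← h] at hL2pos; simp at hL2pos
      set L := ‖x - m‖ with hL
      have hhnn : 0 ≤ r - s1 := by nlinarith [hs1sq, hs1nn, hq, hr]
      set yy := m + ((r - s1) / L) • (m - x) with hyy
      have hyyA : yy ∈ A := by
        rw [hAeq]
        refine Set.mem_iInter₂.mpr fun c hc => ?_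
        rw [Metric.mem_closedBall, dist_eq_norm]
        have hyc2 : yy - c = (m - c) + ((r - s1) / L) • (m - x) := by rw [hyy]; abel
        have hmx : ‖m - x‖ = L := by rw [hL]; exact norm_sub_rev m x
        have hn1 : ‖((r - s1) / L) • (m - x)‖ = r - s1 := by
          rw [norm_smul, Real.norm_eq_abs, abs_of_nonneg (div_nonneg hhnn hLpos.le), hmx]
          field_simp
        have hml : ‖m - c‖ ≤ s1 := by
          calc ‖m - c‖ = Real.sqrt (‖m - c‖ ^ 2) := (Real.sqrt_sq (norm_nonneg _)).symm
            _ ≤ Real.sqrt (r ^ 2 - (d / 2) ^ 2) := Real.sqrt_le_sqrt (hmc c hc)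
            _ = s1 := rfl
        calc ‖yy - c‖ ≤ ‖m - c‖ + ‖((r - s1) / L) • (m - x)‖ := by
              rw [hyc2]; exact norm_add_le _ _
          _ ≤ s1 + (r - s1) := by rw [hn1]; linarith
          _ = r := by ring
      have hfinal1 : ‖x - yy‖ ≤ ρ := hfarM x yy hyyA
      have hxyyeq : x - yy = (1 + (r - s1) / L) • (x - m) := by
        rw [hyy]
        rw [show (1 + (r - s1) / L) • (x - m) = (x - m) + ((r - s1) / L) • (x - m) by module]
        rw [show ((r - s1) / L) • (x - m) = -(((r - s1) / L) • (m - x)) by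
          rw [← smul_neg]; congr 1; abel]
        abel
      have hfinal2 : ‖x - yy‖ = L + (r - s1) := by
        rw [hxyyeq, norm_smul, Real.norm_eq_abs,
          abs_of_pos (add_pos_of_pos_of_nonneg one_pos (div_nonneg hhnn hLpos.le)), ← hL]
        field_simp
      have := aux_sqrt_trick hr hq hρ0 hs1nn hs1sq (norm_nonneg (x - m)) hLsq
      rw [← hL] at this
      linarith
  · -- Reverse direction
    rintro ⟨hconv, huniq⟩
    obtain ⟨a₀, ha₀⟩ := id hne
    set F : EuclideanSpace ℝ (Fin n) → ℝ := fun z => ‖z - far z‖ with hF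
    have hFge : ∀ z, ∀ b ∈ A, ‖z - b‖ ≤ F z := fun z => hfarM z
    have hFa₀ : ∀ z, ‖z - a₀‖ ≤ F z := fun z => hFge z a₀ ha₀
    have hFnn : ∀ z, 0 ≤ F z := fun z => norm_nonneg _
    have hFtri : ∀ z z', F z ≤ ‖z - z'‖ + F z' := by
      intro z z'
      calc F z = ‖z - far z‖ := rfl
        _ ≤ ‖z - z'‖ + ‖z' - far z‖ := by
            rw [show z - far z = (z - z') + (z' - far z) by abel]
            exact norm_add_le _ _
        _ ≤ ‖z - z'‖ + F z' := by linarith [hFge z' (far z) (hfarA z)]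
    have hFcont : Continuous F := by
      have : LipschitzWith 1 F := by
        apply LipschitzWith.of_dist_le_mul
        intro z z'
        rw [NNReal.coe_one, one_mul, Real.dist_eq, dist_eq_norm, abs_sub_le_iff]
        constructor
        · linarith [hFtri z z']
        · rw [norm_sub_rev]; linarith [hFtri z' z]
      exact this.continuous
    -- Global minimizer of F
    have ha₀K : a₀ ∈ Metric.closedBall a₀ (F a₀ + 1) := by
      rw [Metric.mem_closedBall, dist_self]; linarith [hFnn a₀]
    obtain ⟨z₀, hz₀K, hz₀min⟩ :=
      (isCompact_closedBall a₀ (F a₀ + 1)).exists_isMinOn ⟨a₀, ha₀K⟩ hFcont.continuousOn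
    have hz₀glob : ∀ z, F z₀ ≤ F z := by
      intro z
      by_cases hz : z ∈ Metric.closedBall a₀ (F a₀ + 1)
      · exact hz₀min hz
      · have h1 : F a₀ + 1 < dist z a₀ := by
          rw [Metric.mem_closedBall] at hz; linarith [not_le.mp hz]
        have h2 : dist z a₀ ≤ F z := by rw [dist_eq_norm]; exact hFa₀ z
        have h3 : F z₀ ≤ F a₀ := hz₀min ha₀K
        linarith
    -- C is nonempty: F z₀ ≤ r
    have hFz₀r : F z₀ ≤ r := by
      by_contra hgt
      push_neg at hgt
      obtain ⟨aa, haa⟩ := huniq z₀ ⟨far z₀, hfarA z₀, hgt⟩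
      have hfz₀ : far z₀ ∈ farPoints A z₀ := ⟨hfarA z₀, hfarM z₀⟩
      rw [haa] at hfz₀
      have hfps : farPoints A z₀ = {far z₀} := by
        rw [haa, Set.mem_singleton_iff.mp hfz₀]
      have hwlt : ⟪z₀ - far z₀, far z₀ - z₀⟫ < 0 := by
        rw [show far z₀ - z₀ = -(z₀ - far z₀) by abel, inner_neg_right,
          real_inner_self_eq_norm_sq]
        have : 0 < ‖z₀ - far z₀‖ := lt_trans hr hgt
        nlinarith
      exact aux_no_descent hA hfps hwlt fun t ht =>
        ⟨far (z₀ + t • (far z₀ - z₀)), hfarA _, hz₀glob _⟩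
    set CC := ⋂ b ∈ A, Metric.closedBall b r with hCC
    have hc₀CC : z₀ ∈ CC := by
      refine Set.mem_iInter₂.mpr fun b hb => ?_
      rw [Metric.mem_closedBall, dist_eq_norm]
      exact le_trans (hFge z₀ b hb) hFz₀r
    refine ⟨CC, ⟨z₀, hc₀CC⟩, ?_⟩
    apply Set.Subset.antisymm
    · intro b hb
      refine Set.mem_iInter₂.mpr fun c hc => ?_
      have := Set.mem_iInter₂.mp hc b hb
      rw [Metric.mem_closedBall] at this ⊢
      rwa [dist_comm]
    · intro x₁ hx₁
      by_contra hx₁A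
      have hx₁C : ∀ c ∈ CC, ‖x₁ - c‖ ≤ r := by
        intro c hc
        have := Set.mem_iInter₂.mp hx₁ c hc
        rwa [Metric.mem_closedBall, dist_eq_norm] at this
      -- Projection of x₁ on A
      obtain ⟨p, hpA, hpmin⟩ :=
        exists_norm_eq_iInf_of_complete_convex hne hcl.isComplete hconv x₁
      have hproj : ∀ b ∈ A, ⟪x₁ - p, b - p⟫ ≤ 0 :=
        (norm_eq_iInf_iff_real_inner_le_zero hconv hpA).mp hpmin
      set dd := ‖x₁ - p‖ with hdd
      have hddpos : 0 < dd := by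
        rw [hdd]
        exact norm_pos_iff.mpr (sub_ne_zero.mpr fun h => hx₁A (h ▸ hpA))
      set u := dd⁻¹ • (x₁ - p) with hu
      have hunorm : ‖u‖ = 1 := by
        rw [hu, norm_smul, Real.norm_eq_abs, abs_of_pos (inv_pos.mpr hddpos), ← hdd]
        field_simp
      have huu : ⟪u, u⟫ = 1 := by
        rw [real_inner_self_eq_norm_sq, hunorm]; norm_num
      have hup : ⟪u, x₁ - p⟫ = dd := by
        rw [hu, real_inner_smul_left, real_inner_self_eq_norm_sq, ← hdd]
        field_simp
      -- CC is compact
      have hCCclosed : IsClosed CC :=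
        isClosed_biInter fun b _ => Metric.isClosed_closedBall
      have hCCbdd : Bornology.IsBounded CC :=
        (Metric.isBounded_closedBall (x := a₀) (r := r)).subset fun c hc =>
          Set.mem_iInter₂.mp hc a₀ ha₀
      have hCCcomp : IsCompact CC := Metric.isCompact_of_isClosed_isBounded hCCclosed hCCbdd
      obtain ⟨cstar, hcstar, hcsmax⟩ := hCCcomp.exists_isMaxOn ⟨z₀, hc₀CC⟩
        ((continuous_const.inner (continuous_const.sub continuous_id)).continuousOn :
          ContinuousOn (fun c => ⟪u, p - c⟫) CC)
      set s₀ := ⟪u, p - cstar⟫ with hs₀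
      have hs₀max : ∀ c ∈ CC, ⟪u, p - c⟫ ≤ s₀ := fun c hc => hcsmax hc
      have hs₀lt : s₀ ≤ r - dd := by
        have h1 : ⟪u, x₁ - cstar⟫ ≤ r := by
          calc ⟪u, x₁ - cstar⟫ ≤ ‖u‖ * ‖x₁ - cstar‖ := real_inner_le_norm _ _
            _ = ‖x₁ - cstar‖ := by rw [hunorm, one_mul]
            _ ≤ r := hx₁C cstar hcstar
        rw [show x₁ - cstar = (x₁ - p) + (p - cstar) by abel, inner_add_right, hup] at h1
        linarith
      have hmr : max s₀ 0 < r := max_lt (by linarith) hr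
      set sb := (max s₀ 0 + r) / 2 with hsb
      have hsb1 : s₀ < sb := by
        have := le_max_left s₀ 0; rw [hsb]; linarith
      have hsb0 : 0 < sb := by
        have := le_max_right s₀ 0; rw [hsb]; linarith
      have hsbr : sb < r := by rw [hsb]; linarith
      -- Minimize F over the halfspace H
      set H := {z : EuclideanSpace ℝ (Fin n) | sb ≤ ⟪u, p - z⟫} with hH
      set h₀ := p - sb • u with hh₀
      have hh₀H : h₀ ∈ H := by
        simp only [hH, Set.mem_setOf_eq, hh₀]
        rw [show p - (p - sb • u) = sb • u by abel, real_inner_smul_right, huu]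
        linarith
      have hHclosed : IsClosed H := by
        have : H = (fun z => ⟪u, p - z⟫) ⁻¹' Set.Ici sb := rfl
        rw [this]
        exact isClosed_Ici.preimage (continuous_const.inner (continuous_const.sub continuous_id))
      have hK1comp : IsCompact (H ∩ Metric.closedBall a₀ (F h₀ + 1)) :=
        (isCompact_closedBall a₀ (F h₀ + 1)).inter_left hHclosed
      have hh₀K1 : h₀ ∈ H ∩ Metric.closedBall a₀ (F h₀ + 1) :=
        ⟨hh₀H, by rw [Metric.mem_closedBall, dist_eq_norm]; linarith [hFa₀ h₀]⟩
      obtain ⟨cs, hcsK1, hcsmin⟩ := hK1comp.exists_isMinOn ⟨h₀, hh₀K1⟩ hFcont.continuousOn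
      obtain ⟨hcsH, hcsball⟩ := hcsK1
      have hcsH' : sb ≤ ⟪u, p - cs⟫ := hcsH
      have hcsmin' : ∀ z ∈ H, F cs ≤ F z := by
        intro z hz
        by_cases hzb : z ∈ Metric.closedBall a₀ (F h₀ + 1)
        · exact hcsmin ⟨hz, hzb⟩
        · have h1 : F h₀ + 1 < dist z a₀ := by
            rw [Metric.mem_closedBall] at hzb; linarith [not_le.mp hzb]
          have h2 : dist z a₀ ≤ F z := by rw [dist_eq_norm]; exact hFa₀ z
          have h3 : F cs ≤ F h₀ := hcsmin hh₀K1
          linarith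
      -- (a) r < F cs
      have hFcs : r < F cs := by
        by_contra hle
        push_neg at hle
        have hcsCC : cs ∈ CC := Set.mem_iInter₂.mpr fun b hb => by
          rw [Metric.mem_closedBall, dist_eq_norm]
          exact le_trans (hFge cs b hb) hle
        have := hs₀max cs hcsCC
        linarith
      -- unique farthest point at cs
      obtain ⟨aa, haa⟩ := huniq cs ⟨far cs, hfarA cs, hFcs⟩
      have hfcs : far cs ∈ farPoints A cs := ⟨hfarA cs, hfarM cs⟩
      rw [haa] at hfcs
      have haa2 : farPoints A cs = {far cs} := by
        rw [haa, Set.mem_singleton_iff.mp hfcs]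
      set as := far cs with has
      set ρs := F cs with hρs
      have hcsas : ‖cs - as‖ = ρs := rfl
      have hρspos : 0 < ρs := lt_trans hr hFcs
      -- (b) activeness of the constraint
      have hact : ⟪u, p - cs⟫ = sb := by
        by_contra hne3
        have hgt2 : sb < ⟪u, p - cs⟫ := lt_of_le_of_ne hcsH' (Ne.symm hne3)
        have hglob : ∀ y, F cs ≤ F y := by
          intro y
          set δ := ⟪u, p - cs⟫ - sb with hδ
          have hδpos : 0 < δ := by rw [hδ]; linarith
          set t := min 1 (δ / (1 + |⟪u, y - cs⟫|)) with htdef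
          have htpos : 0 < t :=
            lt_min one_pos (div_pos hδpos (by positivity))
          have ht1 : t ≤ 1 := min_le_left _ _
          have htH : cs + t • (y - cs) ∈ H := by
            simp only [hH, Set.mem_setOf_eq]
            rw [show p - (cs + t • (y - cs)) = (p - cs) - t • (y - cs) by abel,
              inner_sub_right, real_inner_smul_right]
            have h4 : t * ⟪u, y - cs⟫ ≤ t * |⟪u, y - cs⟫| :=
              mul_le_mul_of_nonneg_left (le_abs_self _) htpos.le
            have h5 : t * |⟪u, y - cs⟫| ≤ (δ / (1 + |⟪u, y - cs⟫|)) * |⟪u, y - cs⟫| :=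
              mul_le_mul_of_nonneg_right (min_le_right _ _) (abs_nonneg _)
            have h6 : (δ / (1 + |⟪u, y - cs⟫|)) * |⟪u, y - cs⟫| ≤ δ := by
              rw [div_mul_eq_mul_div, div_le_iff₀ (by positivity)]
              nlinarith [abs_nonneg ⟪u, y - cs⟫, hδpos]
            have : t * ⟪u, y - cs⟫ ≤ δ := by linarith
            rw [hδ] at this
            linarith
          have hcvx : F (cs + t • (y - cs)) ≤ (1 - t) * F cs + t * F y := by
            set b := far (cs + t • (y - cs)) with hb
            have hbA : b ∈ A := hfarA _
            have hexp2 : cs + t • (y - cs) - b = (1 - t) • (cs - b) + t • (y - b) := by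
              module
            calc F (cs + t • (y - cs)) = ‖cs + t • (y - cs) - b‖ := rfl
              _ = ‖(1 - t) • (cs - b) + t • (y - b)‖ := by rw [hexp2]
              _ ≤ ‖(1 - t) • (cs - b)‖ + ‖t • (y - b)‖ := norm_add_le _ _
              _ = (1 - t) * ‖cs - b‖ + t * ‖y - b‖ := by
                  rw [norm_smul, norm_smul, Real.norm_eq_abs, Real.norm_eq_abs,
                    abs_of_nonneg (by linarith : (0:ℝ) ≤ 1 - t), abs_of_pos htpos]
              _ ≤ (1 - t) * F cs + t * F y := by
                  have h7 := hFge cs b hbA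
                  have h8 := hFge y b hbA
                  nlinarith [htpos.le, (by linarith : (0:ℝ) ≤ 1 - t)]
          have h9 := hcsmin' _ htH
          nlinarith [htpos]
        have h10 := hglob z₀
        linarith
      -- (d) alignment of the farthest point with u
      have halign : cs - as = (-ρs) • u := by
        by_contra hne4
        set v := ρs⁻¹ • (cs - as) with hv
        have hcsas' : cs - as = ρs • v := by
          rw [hv, smul_inv_smul₀ hρspos.ne']
        have hvnorm : ‖v‖ = 1 := by
          rw [hv, norm_smul, Real.norm_eq_abs, abs_of_pos (inv_pos.mpr hρspos), hcsas]
          field_simp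
        have hvv : ⟪v, v⟫ = 1 := by
          rw [real_inner_self_eq_norm_sq, hvnorm]; norm_num
        have hvu : -1 < ⟪u, v⟫ := by
          by_contra hle2
          push_neg at hle2
          have huv2 : ‖u + v‖ ^ 2 = 2 + 2 * ⟪u, v⟫ := by
            rw [norm_add_sq_real, hunorm, hvnorm]; ring
          have h11 : ‖u + v‖ = 0 := by nlinarith [norm_nonneg (u + v)]
          have huv0 : v = -u := eq_neg_of_add_eq_zero_right (norm_eq_zero.mp h11)
          apply hne4
          rw [hcsas', huv0, smul_neg, neg_smul]
        set w := -(u + v) with hw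
        have hw1 : ⟪u, w⟫ ≤ 0 := by
          rw [hw, inner_neg_right, inner_add_right, huu]
          linarith
        have hw2 : ⟪cs - as, w⟫ < 0 := by
          rw [hcsas', real_inner_smul_left, hw, inner_neg_right, inner_add_right, hvv,
            real_inner_comm u v]
          nlinarith [hρspos]
        apply aux_no_descent hA haa2 hw2
        intro t ht
        refine ⟨far (cs + t • w), hfarA _, ?_⟩
        have hwH : cs + t • w ∈ H := by
          simp only [hH, Set.mem_setOf_eq]
          rw [show p - (cs + t • w) = (p - cs) - t • w by abel,
            inner_sub_right, real_inner_smul_right, hact]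
          nlinarith [hw1, ht]
        calc ‖cs - as‖ = ρs := hcsas
          _ ≤ F (cs + t • w) := hcsmin' _ hwH
          _ = ‖cs + t • w - far (cs + t • w)‖ := rfl
      -- (e) final contradiction
      have hasp : ⟪u, as - p⟫ ≤ 0 := by
        have h15 := hproj as (hfarA cs)
        have h16 : x₁ - p = dd • u := by
          rw [hu, smul_inv_smul₀ hddpos.ne']
        rw [h16, real_inner_smul_left] at h15
        nlinarith [hddpos]
      have h17a : as - cs = ρs • u := by
        rw [show as - cs = -(cs - as) by abel, halign, neg_smul, neg_neg]
      have h17 : as - p = (cs - p) + ρs • u := by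
        rw [← h17a]; abel
      have h18 : ⟪u, as - p⟫ = -sb + ρs := by
        rw [h17, inner_add_right, real_inner_smul_right, huu,
          show cs - p = -(p - cs) by abel, inner_neg_right, hact]
        ring
      rw [h18] at hasp
      linarith
end

section
/- Let A ⊆ ℝⁿ be a nonempty compact set and let r > 0. Then E_r(A) = {x ∈ ℝⁿ : there exist a in the frontier of A, a unit vector ζ ∈ N_A^P(a), and t > r such that x = a − t·ζ}, where E_r(A) := {x ∈ ℝⁿ : there exists a ∈ A with ‖x − a‖ > r}. -/
open scoped RealInnerProductSpace

variable {E : Type*} [NormedAddCommGroup E] [InnerProductSpace ℝ E]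

theorem statement_15 {n : ℕ} (A : Set (EuclideanSpace ℝ (Fin n)))
    (hne : A.Nonempty) (hcp : IsCompact A) (r : ℝ) (hr : 0 < r) :
    farExceeds r A =
      {x : EuclideanSpace ℝ (Fin n) | ∃ a ∈ frontier A,
        ∃ ζ ∈ proxNormalCone A a, ‖ζ‖ = 1 ∧ ∃ t : ℝ, r < t ∧ x = a - t • ζ} := by
  have hclosed : IsClosed A := hcp.isClosed
  ext x
  simp only [farExceeds, Set.mem_setOf_eq]
  constructor
  · rintro ⟨a₀, ha₀, hra₀⟩
    obtain ⟨a, haA, hmax⟩ := hcp.exists_isMaxOn hne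
      ((continuous_const.sub continuous_id).norm.continuousOn :
        ContinuousOn (fun y => ‖x - y‖) A)
    have hmax' : ∀ y ∈ A, ‖x - y‖ ≤ ‖x - a‖ := fun y hy => hmax hy
    set v := a - x with hv
    set t := ‖v‖ with htdef
    have hxa : ‖x - a‖ = t := by rw [htdef, hv, norm_sub_rev]
    have htr : r < t := lt_of_lt_of_le hra₀ (hxa ▸ hmax' a₀ ha₀)
    have ht0 : 0 < t := lt_trans hr htr
    set ζ := t⁻¹ • v with hζdef
    have hζ1 : ‖ζ‖ = 1 := by
      rw [hζdef, norm_smul, Real.norm_eq_abs, abs_of_pos (inv_pos.2 ht0),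
        inv_mul_cancel₀ ht0.ne']
    -- key inequality at farthest point
    have hkey : ∀ y ∈ A, ⟪(x - a : EuclideanSpace ℝ (Fin n)), y - a⟫ ≥ (1/2) * ‖y - a‖ ^ 2 := by
      intro y hy
      have h1 : ‖x - y‖ ≤ ‖x - a‖ := hmax' y hy
      have h2 : ‖(x - a) - (y - a)‖ ^ 2 =
          ‖(x - a : EuclideanSpace ℝ (Fin n))‖ ^ 2 - 2 * ⟪(x - a : EuclideanSpace ℝ (Fin n)), y - a⟫ + ‖y - a‖ ^ 2 :=
        norm_sub_sq_real _ _
      have h3 : (x - a) - (y - a) = x - y := by abel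
      rw [h3] at h2
      nlinarith [sq_nonneg ‖x - y‖, norm_nonneg (x - y), norm_nonneg (x - a)]
    have hprox : ζ ∈ proxNormalCone A a := by
      refine ⟨0, le_refl 0, fun y hy => ?_⟩
      have h := hkey y hy
      have hvi : ⟪ζ, y - a⟫ = t⁻¹ * ⟪(v : EuclideanSpace ℝ (Fin n)), y - a⟫ := by
        rw [hζdef, real_inner_smul_left]
      have hvx : ⟪(v : EuclideanSpace ℝ (Fin n)), y - a⟫ = -⟪(x - a : EuclideanSpace ℝ (Fin n)), y - a⟫ := by
        rw [hv, ← inner_neg_left]; congr 1; abel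
      rw [hvi, hvx]
      have : (0:ℝ) ≤ ⟪(x - a : EuclideanSpace ℝ (Fin n)), y - a⟫ := by
        nlinarith [sq_nonneg ‖y - a‖]
      have := mul_nonneg (inv_pos.2 ht0).le this
      nlinarith
    have hfr : a ∈ frontier A := by
      rw [frontier, hclosed.closure_eq]
      refine ⟨haA, fun hint => ?_⟩
      obtain ⟨ε, hε, hball⟩ := Metric.isOpen_iff.1 isOpen_interior a hint
      set y := a + (ε/2) • ζ with hy
      have hyA : y ∈ A := interior_subset (hball (by
        rw [Metric.mem_ball, hy, dist_eq_norm]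
        have : a + (ε/2) • ζ - a = (ε/2) • ζ := by abel
        rw [this, norm_smul, hζ1, mul_one, Real.norm_eq_abs, abs_of_pos (by linarith)]
        linarith))
      have hxy : x - y = -((1 + ε/(2*t)) • v) := by
        rw [hy, hζdef, smul_smul, hv]
        have : (ε/2) * t⁻¹ = ε/(2*t) := by field_simp
        rw [this, add_smul, one_smul]
        module
      have hnorm : ‖x - y‖ = (1 + ε/(2*t)) * t := by
        rw [hxy, norm_neg, norm_smul, Real.norm_eq_abs, abs_of_pos (by positivity), ← htdef]
      have := hmax' y hyA
      rw [hnorm, hxa] at this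
      nlinarith [div_pos (by linarith : (0:ℝ) < ε) (by linarith : (0:ℝ) < 2*t)]
    refine ⟨a, hfr, ζ, hprox, hζ1, t, htr, ?_⟩
    rw [hζdef, smul_smul, mul_inv_cancel₀ ht0.ne', one_smul, hv]
    abel
  · rintro ⟨a, haf, ζ, hζ, hζ1, t, htr, rfl⟩
    refine ⟨a, hclosed.frontier_subset haf, ?_⟩
    have : a - t • ζ - a = -(t • ζ) := by abel
    rw [this, norm_neg, norm_smul, hζ1, mul_one, Real.norm_eq_abs,
      abs_of_pos (lt_trans hr htr)]
    exact htr
end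

section
/- Let A ⊆ ℝⁿ be a closed convex set containing at least two distinct points, and let r > 0. If A is r-spherically supported, then A has nonempty interior. -/
open scoped RealInnerProductSpace

variable {E : Type*} [NormedAddCommGroup E] [InnerProductSpace ℝ E]

theorem statement_16 {n : ℕ} (A : Set (EuclideanSpace ℝ (Fin n)))
    (hcl : IsClosed A) (hcv : Convex ℝ A)
    (htwo : ∃ x ∈ A, ∃ y ∈ A, x ≠ y) (r : ℝ) (hr : 0 < r)
    (hss : IsSphericallySupported r A) :
    (interior A).Nonempty := by
  by_contra hne
  rw [Set.not_nonempty_iff_eq_empty] at hne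
  obtain ⟨x, hx, y, hy, hxy⟩ := htwo
  have hfr : frontier A = A := by
    rw [frontier, hne, hcl.closure_eq, Set.diff_empty]
  set m : EuclideanSpace ℝ (Fin n) := (1/2 : ℝ) • (x + y) with hm
  have hmA : m ∈ A := by
    have := hcv hx hy (by norm_num : (0:ℝ) ≤ 1/2) (by norm_num : (0:ℝ) ≤ 1/2)
      (by norm_num : (1/2 : ℝ) + 1/2 = 1)
    simpa [hm, smul_add] using this
  obtain ⟨ζ, _, hζne, h⟩ := hss m (by rw [hfr]; exact hmA)
  set u := ‖ζ‖⁻¹ • ζ with hu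
  have hxm : x - m = -(y - m) := by rw [hm]; module
  have hkey : y - m = (1/2 : ℝ) • (y - x) := by rw [hm]; module
  have hym : y - m ≠ 0 := by
    rw [hkey]
    exact smul_ne_zero (by norm_num) (sub_ne_zero.mpr hxy.symm)
  have h1 := h x hx
  have h2 := h y hy
  rw [hxm, inner_neg_right, norm_neg] at h1
  have hnorm : 0 < ‖y - m‖ ^ 2 := by
    have := norm_pos_iff.mpr hym
    positivity
  have hc : 0 < 1 / (2 * r) := by positivity
  nlinarith [h1, h2, mul_pos hc hnorm]
end

section
/- Let A ⊆ ℝⁿ be a nonempty closed set, let x ∈ ℝⁿ, and let a ∈ far_A(x). Then: (a) ⟨a − x, y − a⟩ ≤ −(1/2)‖y − a‖² for all y ∈ A; (b) a − x ∈ N_A^P(a); and (c) for every t > 0, far_A(x + t(x − a)) = {a}. -/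
open scoped RealInnerProductSpace

variable {E : Type*} [NormedAddCommGroup E] [InnerProductSpace ℝ E]

theorem statement_17 {n : ℕ} (A : Set (EuclideanSpace ℝ (Fin n)))
    (hne : A.Nonempty) (hcl : IsClosed A) (x : EuclideanSpace ℝ (Fin n))
    (a : EuclideanSpace ℝ (Fin n)) (ha : a ∈ farPoints A x) :
    (∀ y ∈ A, ⟪a - x, y - a⟫ ≤ -(1 / 2) * ‖y - a‖ ^ 2) ∧
    a - x ∈ proxNormalCone A a ∧
    ∀ t : ℝ, 0 < t → farPoints A (x + t • (x - a)) = {a} := by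
  obtain ⟨haA, hfar⟩ := ha
  have key : ∀ y ∈ A, ⟪a - x, y - a⟫ ≤ -(1 / 2) * ‖y - a‖ ^ 2 := by
    intro y hy
    have h := hfar y hy
    have h2 : ‖x - y‖ ^ 2 ≤ ‖x - a‖ ^ 2 := by
      exact pow_le_pow_left₀ (norm_nonneg _) h 2
    have e : x - y = (x - a) - (y - a) := by abel
    rw [e, @norm_sub_sq_real] at h2
    have e2 : ⟪a - x, y - a⟫ = -⟪x - a, y - a⟫ := by
      rw [show a - x = -(x - a) by abel, inner_neg_left]
    nlinarith [h2, e2]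
  refine ⟨key, ⟨0, le_refl 0, fun y hy => ?_⟩, ?_⟩
  · have := key y hy
    nlinarith [sq_nonneg ‖y - a‖]
  · intro t ht
    set x' := x + t • (x - a) with hx'
    have hxa : x' - a = (1 + t) • (x - a) := by
      rw [hx']; module
    have main : ∀ y ∈ A, ‖x' - y‖ ^ 2 ≤ ‖x' - a‖ ^ 2 - t * ‖y - a‖ ^ 2 := by
      intro y hy
      have e : x' - y = (x' - a) - (y - a) := by abel
      rw [e, @norm_sub_sq_real]
      have hi : ⟪x' - a, y - a⟫ = (1 + t) * ⟪x - a, y - a⟫ := by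
        rw [hxa, real_inner_smul_left]
      have e2 : ⟪a - x, y - a⟫ = -⟪x - a, y - a⟫ := by
        rw [show a - x = -(x - a) by abel, inner_neg_left]
      have hk := key y hy
      nlinarith [hk, hi, e2]
    ext b
    simp only [Set.mem_singleton_iff, farPoints, Set.mem_setOf_eq]
    constructor
    · rintro ⟨hbA, hbfar⟩
      have h1 := hbfar a haA
      have h2 := main b hbA
      have h3 : ‖x' - a‖ ^ 2 ≤ ‖x' - b‖ ^ 2 := pow_le_pow_left₀ (norm_nonneg _) h1 2
      have h4 : ‖b - a‖ ^ 2 ≤ 0 := by nlinarith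
      have h5 : ‖b - a‖ = 0 := by nlinarith [sq_nonneg ‖b - a‖, norm_nonneg (b - a)]
      have := norm_sub_eq_zero_iff.mp h5
      simpa using this
    · intro hb
      subst hb
      refine ⟨haA, fun y hy => ?_⟩
      have h2 := main y hy
      have : ‖x' - y‖ ^ 2 ≤ ‖x' - b‖ ^ 2 := by nlinarith [sq_nonneg ‖y - b‖]
      exact (pow_le_pow_iff_left₀ (norm_nonneg _) (norm_nonneg _) (by norm_num)).mp this
end

section
/- Let U ⊆ ℝⁿ be an open, convex, bounded set, let K > 0, let f : U → ℝ be K-Lipschitz, and let r > 0. If the epigraph epi f := {(x, y) ∈ ℝⁿ × ℝ : x ∈ U and y ≥ f(x)} satisfies the exterior r-sphere condition, then epi f is r/(1 + K²)^{3/2}-prox-regular. -/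
open scoped RealInnerProductSpace

variable {E : Type*} [NormedAddCommGroup E] [InnerProductSpace ℝ E]

/-! Extend `f` to a `K`-Lipschitz `g` on the whole space. At a graph point `(y, g y)` over `U`, the
unit normal `η` of an exterior `r`-sphere satisfies `‖η.fst‖ ≤ K (-η.snd)`, so its vertical
component is at least `1 / √(1 + K²)`; dividing the sphere inequality by `-η.snd` shows that
`g + c ‖·‖²` is convex on `U` for `c = (1 + K²)^{3/2} / (2r)`.

At a frontier point `a` with unit proximal normal `ν = (ν₁, -β)` one has `β ≥ 0` and
`β (a.snd - g a.fst) = 0`, so `q w = β g w + c ‖w - a.fst‖² - ⟪ν₁, w - a.fst⟫` is convex on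
`closure U` and, by the proximal normal inequality, `q a.fst ≤ q w + M ‖w - a.fst‖²`. A convex
function with such a quadratic lower bound at a point is minimal there, and `q a.fst ≤ q z.fst` is
the prox-regularity inequality at `z`. -/

open Filter Set Topology

lemma nonpos_of_eventually_le_mul {x C : ℝ} (h : ∀ᶠ t in 𝓝[>] 0, x ≤ C * t) : x ≤ 0 := by
  have hlim : Tendsto (fun t => C * t) (𝓝[>] 0) (𝓝 0) := by
    simpa using ((continuous_const_mul C).tendsto 0).mono_left nhdsWithin_le_nhds
  exact ge_of_tendsto hlim h

lemma smul_mem_proxNormalCone {A : Set E} {a ζ : E} (hζ : ζ ∈ proxNormalCone A a) {c : ℝ}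
    (hc : 0 ≤ c) : c • ζ ∈ proxNormalCone A a := by
  obtain ⟨σ, hσ, h⟩ := hζ
  refine ⟨c * σ, mul_nonneg hc hσ, fun x hx => ?_⟩
  rw [real_inner_smul_left, mul_assoc]
  exact mul_le_mul_of_nonneg_left (h x hx) hc

lemma proxNormalCone_subset_closure (A : Set E) (a : E) :
    proxNormalCone A a ⊆ proxNormalCone (closure A) a := by
  rintro ζ ⟨σ, hσ, h⟩
  have hclosed : IsClosed {x | ⟪ζ, x - a⟫ ≤ σ * ‖x - a‖ ^ 2} :=
    isClosed_le (by fun_prop) (by fun_prop)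
  exact ⟨σ, hσ, fun x hx => closure_minimal h hclosed hx⟩

lemma inner_nonpos_of_eventually_add_smul_mem {A : Set E} {a ζ v : E}
    (hζ : ζ ∈ proxNormalCone A a) (hv : ∀ᶠ t : ℝ in 𝓝[>] 0, a + t • v ∈ A) : ⟪ζ, v⟫ ≤ 0 := by
  obtain ⟨σ, -, hσ⟩ := hζ
  refine nonpos_of_eventually_le_mul (C := σ * ‖v‖ ^ 2) ?_
  filter_upwards [hv, self_mem_nhdsWithin] with t hmem (ht : 0 < t)
  have h := hσ _ hmem
  rw [add_sub_cancel_left, real_inner_smul_right, norm_smul, Real.norm_of_nonneg ht.le] at h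
  nlinarith

lemma ConvexOn.closure_of_continuous {F : Type*} [TopologicalSpace F] [AddCommGroup F]
    [Module ℝ F] [IsTopologicalAddGroup F] [ContinuousSMul ℝ F] {S : Set F} {φ : F → ℝ}
    (hφ : ConvexOn ℝ S φ) (hc : Continuous φ) : ConvexOn ℝ (closure S) φ := by
  refine ⟨hφ.1.closure, fun x hx y hy a b ha hb hab => ?_⟩
  have hsub : closure (S ×ˢ S) ⊆ {p : F × F | φ (a • p.1 + b • p.2) ≤ a • φ p.1 + b • φ p.2} :=
    closure_minimal (fun p hp => hφ.2 hp.1 hp.2 ha hb hab)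
      (isClosed_le (by fun_prop) (by fun_prop))
  have hxy : (x, y) ∈ closure (S ×ˢ S) := by rw [closure_prod_eq]; exact ⟨hx, hy⟩
  exact hsub hxy

lemma ConvexOn.isMinOn_of_le_add_sq {S : Set E} {φ : E → ℝ} (hφ : ConvexOn ℝ S φ) {x₀ : E}
    (hx₀ : x₀ ∈ S) {M : ℝ} (hM : ∀ w ∈ S, φ x₀ ≤ φ w + M * ‖w - x₀‖ ^ 2) : IsMinOn φ S x₀ := by
  refine isMinOn_iff.2 fun x hx => ?_
  suffices φ x₀ - φ x ≤ 0 by linarith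
  refine nonpos_of_eventually_le_mul (C := M * ‖x - x₀‖ ^ 2) ?_
  filter_upwards [Ioo_mem_nhdsGT one_pos] with t ⟨ht0, ht1⟩
  have hseg : (1 - t) • x₀ + t • x = x₀ + t • (x - x₀) := by module
  have hconv := hφ.2 hx₀ hx (by linarith : 0 ≤ 1 - t) ht0.le (sub_add_cancel 1 t)
  have hlow := hM _ (hφ.1 hx₀ hx (by linarith : 0 ≤ 1 - t) ht0.le (sub_add_cancel 1 t))
  rw [hseg, add_sub_cancel_left, norm_smul, Real.norm_of_nonneg ht0.le] at hlow
  rw [hseg, smul_eq_mul, smul_eq_mul] at hconv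
  nlinarith

lemma convexOn_of_forall_exists_le_inner {S : Set E} (hS : Convex ℝ S) {φ : E → ℝ}
    (h : ∀ y ∈ S, ∃ ξ : E, ∀ x ∈ S, φ y + ⟪ξ, x - y⟫ ≤ φ x) : ConvexOn ℝ S φ := by
  refine ⟨hS, fun x hx y hy a b ha hb hab => ?_⟩
  set m := a • x + b • y
  obtain ⟨ξ, hξ⟩ := h m (hS hx hy ha hb hab)
  have hbal : a * ⟪ξ, x - m⟫ + b * ⟪ξ, y - m⟫ = 0 := by
    rw [← real_inner_smul_right, ← real_inner_smul_right, ← inner_add_right]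
    convert inner_zero_right ξ
    obtain rfl : b = 1 - a := by linarith
    module
  have hsplit : φ m = a * φ m + b * φ m := by rw [← add_mul, hab, one_mul]
  simp only [smul_eq_mul]
  nlinarith [mul_le_mul_of_nonneg_left (hξ x hx) ha, mul_le_mul_of_nonneg_left (hξ y hy) hb]

lemma convexOn_add_sq_of_forall_exists_le_inner {S : Set E} (hS : Convex ℝ S) {φ : E → ℝ}
    {c : ℝ} (h : ∀ y ∈ S, ∃ ξ : E, ∀ x ∈ S, φ y + ⟪ξ, x - y⟫ - c * ‖x - y‖ ^ 2 ≤ φ x) :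
    ConvexOn ℝ S (fun x => φ x + c * ‖x‖ ^ 2) := by
  refine convexOn_of_forall_exists_le_inner hS fun y hy => ?_
  obtain ⟨ξ, hξ⟩ := h y hy
  refine ⟨ξ + (2 * c) • y, fun x hx => ?_⟩
  have hexp : ‖x‖ ^ 2 = ‖y‖ ^ 2 + 2 * ⟪y, x - y⟫ + ‖x - y‖ ^ 2 := by
    rw [← norm_add_sq_real, add_sub_cancel]
  rw [inner_add_left, real_inner_smul_left, hexp]
  linarith [hξ x hx]

lemma ConvexOn.mul_add_sq_sub_inner {S : Set E} {φ : E → ℝ} {c β : ℝ}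
    (hφ : ConvexOn ℝ S (fun x => φ x + c * ‖x‖ ^ 2)) (hc : 0 ≤ c) (hβ₀ : 0 ≤ β) (hβ₁ : β ≤ 1)
    (x₀ v : E) : ConvexOn ℝ S (fun w => β * φ w + c * ‖w - x₀‖ ^ 2 - ⟪v, w - x₀⟫) := by
  have hsq : ConvexOn ℝ S (fun w => ((1 - β) * c) * ‖w‖ ^ 2) :=
    ((convexOn_norm hφ.1).pow (fun _ _ => norm_nonneg _) 2).smul
      (mul_nonneg (by linarith) hc)
  have haff : ConvexOn ℝ S (fun w => ⟪-(2 * c) • x₀ - v, w⟫ + (c * ‖x₀‖ ^ 2 + ⟪v, x₀⟫)) :=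
    ((innerₗ E (-(2 * c) • x₀ - v)).convexOn hφ.1).add_const _
  refine ((hφ.smul hβ₀).add (hsq.add haff)).congr fun w _ => ?_
  simp only [Pi.add_apply, smul_eq_mul, norm_sub_sq_real, inner_sub_left,
    inner_sub_right, real_inner_smul_left, real_inner_comm x₀ w]
  ring

section Epigraph

open scoped NNReal

variable {F : Type*} [NormedAddCommGroup F]

lemma WithLp.norm_sq_eq_norm_fst_sq_add_snd_sq (p : WithLp 2 (F × ℝ)) :
    ‖p‖ ^ 2 = ‖p.fst‖ ^ 2 + p.snd ^ 2 := by
  rw [WithLp.prod_norm_sq_eq_of_L2, Real.norm_eq_abs, sq_abs]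

lemma LipschitzWith.sub_sq_le {K : ℝ≥0} {g : F → ℝ} (hg : LipschitzWith K g) (x y : F) :
    (g x - g y) ^ 2 ≤ K ^ 2 * ‖x - y‖ ^ 2 := by
  have h := hg.dist_le_mul x y
  rw [Real.dist_eq, dist_eq_norm] at h
  rw [← sq_abs, ← mul_pow]
  exact pow_le_pow_left₀ (abs_nonneg _) h 2

def epiOn (U : Set F) (g : F → ℝ) : Set (WithLp 2 (F × ℝ)) :=
  {p | p.fst ∈ U ∧ g p.fst ≤ p.snd}

variable {U : Set F} {g : F → ℝ}

lemma closure_epiOn_subset (hg : Continuous g) :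
    closure (epiOn U g) ⊆ {p | p.fst ∈ closure U ∧ g p.fst ≤ p.snd} :=
  closure_minimal (fun _ hp => ⟨subset_closure hp.1, hp.2⟩)
    ((isClosed_closure.preimage (WithLp.continuous_fst 2 F ℝ)).inter
      (isClosed_le (hg.comp (WithLp.continuous_fst 2 F ℝ)) (WithLp.continuous_snd 2 F ℝ)))

lemma mem_closure_epiOn_of_lt (hg : Continuous g) {p : WithLp 2 (F × ℝ)}
    (hp : p.fst ∈ closure U) (hlt : g p.fst < p.snd) : p ∈ closure (epiOn U g) := by
  have hx : p.fst ∈ closure ({x | g x < p.snd} ∩ U) :=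
    (isOpen_lt hg continuous_const).inter_closure ⟨hlt, hp⟩
  exact map_mem_closure (f := fun x => WithLp.toLp 2 (x, p.snd)) (t := epiOn U g) (by fun_prop) hx
    fun x hx => ⟨hx.2, hx.1.le⟩

lemma toLp_mem_frontier_epiOn {x : F} (hx : x ∈ U) :
    WithLp.toLp 2 (x, g x) ∈ frontier (epiOn U g) := by
  rw [frontier_eq_closure_inter_closure]
  refine ⟨subset_closure ⟨hx, le_rfl⟩, ?_⟩
  have h0 : (0 : ℝ) ∈ closure (Ioi 0) := by simp
  rw [← sub_zero (g x)]
  refine map_mem_closure (f := fun t : ℝ => WithLp.toLp 2 (x, g x - t)) (t := (epiOn U g)ᶜ)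
    (by fun_prop) h0 fun t (ht : 0 < t) hmem => ?_
  have hle := hmem.2
  simp only [WithLp.toLp_fst, WithLp.toLp_snd] at hle
  linarith

variable [InnerProductSpace ℝ F]

lemma WithLp.inner_eq_inner_fst_add_mul_snd (p q : WithLp 2 (F × ℝ)) :
    ⟪p, q⟫ = ⟪p.fst, q.fst⟫ + p.snd * q.snd := by
  simp [mul_comm]

variable {a ν : WithLp 2 (F × ℝ)}

lemma snd_nonpos_of_mem_proxNormalCone_epiOn (hg : Continuous g)
    (ha : a ∈ closure (epiOn U g)) (hν : ν ∈ proxNormalCone (epiOn U g) a) : ν.snd ≤ 0 := by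
  obtain ⟨ha₁, ha₂⟩ := closure_epiOn_subset hg ha
  have h := inner_nonpos_of_eventually_add_smul_mem (v := WithLp.toLp 2 (0, 1))
    (proxNormalCone_subset_closure _ _ hν) ?_
  · simpa [WithLp.inner_eq_inner_fst_add_mul_snd] using h
  filter_upwards [self_mem_nhdsWithin] with t (ht : 0 < t)
  exact mem_closure_epiOn_of_lt hg (by simpa using ha₁) (by simp; linarith)

lemma snd_mul_sub_eq_zero_of_mem_proxNormalCone_epiOn (hg : Continuous g)
    (ha : a ∈ closure (epiOn U g)) (hν : ν ∈ proxNormalCone (epiOn U g) a) :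
    ν.snd * (a.snd - g a.fst) = 0 := by
  obtain ⟨ha₁, ha₂⟩ := closure_epiOn_subset hg ha
  rcases ha₂.eq_or_lt with heq | hlt
  · rw [heq, sub_self, mul_zero]
  have h := inner_nonpos_of_eventually_add_smul_mem (v := WithLp.toLp 2 (0, -1))
    (proxNormalCone_subset_closure _ _ hν) ?_
  · have hν₂ := snd_nonpos_of_mem_proxNormalCone_epiOn hg ha hν
    simp at h
    rw [le_antisymm hν₂ h, zero_mul]
  filter_upwards [Ioo_mem_nhdsGT (sub_pos.2 hlt)] with t ⟨ht, htδ⟩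
  exact mem_closure_epiOn_of_lt hg (by simpa using ha₁) (by simp; linarith)

lemma norm_fst_le_of_mem_proxNormalCone_epiOn {K : ℝ≥0} (hU : IsOpen U)
    (hg : LipschitzWith K g) {x : F} (hx : x ∈ U)
    (hν : ν ∈ proxNormalCone (epiOn U g) (WithLp.toLp 2 (x, g x))) :
    ‖ν.fst‖ ≤ K * -ν.snd := by
  have hν₂ := snd_nonpos_of_mem_proxNormalCone_epiOn hg.continuous
    (subset_closure ⟨hx, le_rfl⟩) hν
  have h := inner_nonpos_of_eventually_add_smul_mem hν
    (v := WithLp.toLp 2 (ν.fst, K * ‖ν.fst‖)) ?_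
  · simp only [WithLp.inner_eq_inner_fst_add_mul_snd, WithLp.toLp_fst, WithLp.toLp_snd,
      real_inner_self_eq_norm_sq] at h
    nlinarith [norm_nonneg ν.fst, mul_nonneg K.coe_nonneg (neg_nonneg.2 hν₂)]
  have hseg : Tendsto (fun t : ℝ => x + t • ν.fst) (𝓝[>] 0) (𝓝 x) := by
    rw [← add_zero x]
    exact tendsto_nhdsWithin_of_tendsto_nhds (by simpa using (by fun_prop :
      Continuous fun t : ℝ => x + t • ν.fst).tendsto 0)
  filter_upwards [hseg.eventually (hU.mem_nhds hx), self_mem_nhdsWithin] with t hxt (ht : 0 < t)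
  refine ⟨hxt, ?_⟩
  have hlip := hg.dist_le_mul (x + t • ν.fst) x
  rw [Real.dist_eq, dist_eq_norm, add_sub_cancel_left, norm_smul, Real.norm_of_nonneg ht.le]
    at hlip
  simp only [WithLp.add_fst, WithLp.add_snd, WithLp.smul_fst, WithLp.smul_snd, WithLp.toLp_fst,
    WithLp.toLp_snd, smul_eq_mul]
  linarith [le_abs_self (g (x + t • ν.fst) - g x)]

theorem convexOn_add_sq_of_satisfiesExtSphere {K : ℝ≥0} {r : ℝ} (hU : IsOpen U)
    (hUc : Convex ℝ U) (hg : LipschitzWith K g) (hr : 0 < r)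
    (hext : SatisfiesExtSphere r (epiOn U g)) :
    ConvexOn ℝ U (fun x => g x + (1 + K ^ 2) * √(1 + K ^ 2) / (2 * r) * ‖x‖ ^ 2) := by
  refine convexOn_add_sq_of_forall_exists_le_inner hUc fun y hy => ?_
  obtain ⟨η₀, -, hη₀, hsphere⟩ := hext _ (toLp_mem_frontier_epiOn hy)
  set η := ‖η₀‖⁻¹ • η₀
  have hη : η ∈ proxNormalCone (epiOn U g) (WithLp.toLp 2 (y, g y)) :=
    ⟨1 / (2 * r), by positivity, hsphere⟩
  have hunit : ‖η.fst‖ ^ 2 + η.snd ^ 2 = 1 := by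
    rw [← WithLp.norm_sq_eq_norm_fst_sq_add_snd_sq,
      show ‖η‖ = 1 by simpa using norm_smul_inv_norm (𝕜 := ℝ) hη₀, one_pow]
  have hfst := norm_fst_le_of_mem_proxNormalCone_epiOn hU hg hy hη
  have hsnd := snd_nonpos_of_mem_proxNormalCone_epiOn hg.continuous
    (subset_closure ⟨hy, le_rfl⟩) hη
  set β := -η.snd
  have hβ : 1 ≤ (1 + K ^ 2) * β ^ 2 := by nlinarith [norm_nonneg η.fst]
  have hβpos : 0 < β := by
    by_contra! h
    have h0 : β = 0 := le_antisymm h (neg_nonneg.2 hsnd)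
    norm_num [h0] at hβ
  have hβinv : β⁻¹ ≤ √(1 + K ^ 2) := by
    rw [Real.le_sqrt (by positivity) (by positivity), inv_pow,
      inv_le_iff_one_le_mul₀ (by positivity)]
    linarith
  refine ⟨β⁻¹ • η.fst, fun x hx => ?_⟩
  have h := hsphere _ (⟨hx, le_rfl⟩ : WithLp.toLp 2 (x, g x) ∈ epiOn U g)
  rw [WithLp.inner_eq_inner_fst_add_mul_snd, WithLp.norm_sq_eq_norm_fst_sq_add_snd_sq] at h
  simp only [WithLp.sub_fst, WithLp.sub_snd, WithLp.toLp_fst, WithLp.toLp_snd] at h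
  have key : ⟪η.fst, x - y⟫ ≤ β * (g x - g y) + (1 + K ^ 2) / (2 * r) * ‖x - y‖ ^ 2 := by
    have : 1 / (2 * r) * (‖x - y‖ ^ 2 + (g x - g y) ^ 2) ≤ (1 + K ^ 2) / (2 * r) * ‖x - y‖ ^ 2 :=
      calc 1 / (2 * r) * (‖x - y‖ ^ 2 + (g x - g y) ^ 2)
          ≤ 1 / (2 * r) * ((1 + K ^ 2) * ‖x - y‖ ^ 2) := by
            gcongr; linarith [hg.sub_sq_le x y]
        _ = (1 + K ^ 2) / (2 * r) * ‖x - y‖ ^ 2 := by ring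
    linarith
  have hcoef : β⁻¹ * ((1 + K ^ 2) / (2 * r)) ≤ (1 + K ^ 2) * √(1 + K ^ 2) / (2 * r) := by
    rw [mul_div_assoc', mul_comm]
    gcongr
  rw [real_inner_smul_left]
  have := mul_le_mul_of_nonneg_left key (inv_nonneg.2 hβpos.le)
  rw [mul_add, ← mul_assoc, inv_mul_cancel₀ hβpos.ne', one_mul, ← mul_assoc] at this
  nlinarith [mul_le_mul_of_nonneg_right hcoef (sq_nonneg ‖x - y‖)]

lemma inner_fst_le_of_mem_proxNormalCone_epiOn {K : ℝ≥0} (hg : LipschitzWith K g)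
    (ha : a ∈ closure (epiOn U g)) (hν : ν ∈ proxNormalCone (epiOn U g) a) :
    ∃ M, ∀ w ∈ U, ⟪ν.fst, w - a.fst⟫ ≤ -ν.snd * (g w - g a.fst) + M * ‖w - a.fst‖ ^ 2 := by
  have hslack := snd_mul_sub_eq_zero_of_mem_proxNormalCone_epiOn hg.continuous ha hν
  obtain ⟨-, ha₂⟩ := closure_epiOn_subset hg.continuous ha
  obtain ⟨σ, hσ₀, hσ⟩ := hν
  refine ⟨σ * (1 + K ^ 2), fun w hw => ?_⟩
  -- the graph of `g` lifted to pass through `a`; the lift costs nothing by `hslack`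
  have h := hσ (WithLp.toLp 2 (w, g w + (a.snd - g a.fst))) ⟨hw, by simpa using ha₂⟩
  rw [WithLp.inner_eq_inner_fst_add_mul_snd, WithLp.norm_sq_eq_norm_fst_sq_add_snd_sq] at h
  simp only [WithLp.sub_fst, WithLp.sub_snd, WithLp.toLp_fst, WithLp.toLp_snd] at h
  rw [show g w + (a.snd - g a.fst) - a.snd = g w - g a.fst by ring] at h
  nlinarith [mul_le_mul_of_nonneg_left (hg.sub_sq_le w a.fst) hσ₀]

lemma one_div_two_mul_div_rpow_three_halves {k r : ℝ} :
    1 / (2 * (r / (1 + k ^ 2) ^ ((3 : ℝ) / 2))) = (1 + k ^ 2) * √(1 + k ^ 2) / (2 * r) := by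
  rw [show (3 : ℝ) / 2 = 1 + 1 / 2 by norm_num, Real.rpow_add (by positivity), Real.rpow_one,
    ← Real.sqrt_eq_rpow]
  field_simp

theorem isProxRegular_epiOn {K : ℝ≥0} {r : ℝ} (hU : IsOpen U) (hUc : Convex ℝ U)
    (hg : LipschitzWith K g) (hr : 0 < r) (hext : SatisfiesExtSphere r (epiOn U g)) :
    IsProxRegular (r / (1 + K ^ 2) ^ ((3 : ℝ) / 2)) (epiOn U g) := by
  intro a ha ζ hζ hζ0 z hz
  rw [one_div_two_mul_div_rpow_three_halves]
  set c := (1 + (K : ℝ) ^ 2) * √(1 + K ^ 2) / (2 * r)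
  have hc : 0 ≤ c := by positivity
  have hgc := hg.continuous
  have hacl := frontier_subset_closure ha
  obtain ⟨ha₁, -⟩ := closure_epiOn_subset hgc hacl
  set ν := ‖ζ‖⁻¹ • ζ
  have hν : ν ∈ proxNormalCone (epiOn U g) a := smul_mem_proxNormalCone hζ (by positivity)
  have hslack := snd_mul_sub_eq_zero_of_mem_proxNormalCone_epiOn hgc hacl hν
  obtain ⟨M, hM⟩ := inner_fst_le_of_mem_proxNormalCone_epiOn hg hacl hν
  set β := -ν.snd
  have hβ₀ : 0 ≤ β := neg_nonneg.2 (snd_nonpos_of_mem_proxNormalCone_epiOn hgc hacl hν)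
  have hβ₁ : β ≤ 1 := by
    have h := WithLp.norm_snd_le (x := ν)
    rw [show ‖ν‖ = 1 by simpa using norm_smul_inv_norm (𝕜 := ℝ) hζ0] at h
    linarith [neg_le_abs ν.snd, Real.norm_eq_abs ν.snd]
  set q : F → ℝ := fun w => β * g w + c * ‖w - a.fst‖ ^ 2 - ⟪ν.fst, w - a.fst⟫
  have hq : ConvexOn ℝ (closure U) q :=
    ((convexOn_add_sq_of_satisfiesExtSphere hU hUc hg hr hext).mul_add_sq_sub_inner
      hc hβ₀ hβ₁ a.fst ν.fst).closure_of_continuous (by fun_prop)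
  have hlow : ∀ w ∈ U, q a.fst ≤ q w + M * ‖w - a.fst‖ ^ 2 := fun w hw => by
    simp only [q, sub_self, norm_zero, inner_zero_right]
    nlinarith [hM w hw, mul_nonneg hc (sq_nonneg ‖w - a.fst‖)]
  have hclosed : IsClosed {w | q a.fst ≤ q w + M * ‖w - a.fst‖ ^ 2} :=
    isClosed_le continuous_const (by fun_prop)
  have hmin : q a.fst ≤ q z.fst :=
    hq.isMinOn_of_le_add_sq ha₁ (fun w hw => closure_minimal hlow hclosed hw) (subset_closure hz.1)
  simp only [q, sub_self, norm_zero, inner_zero_right] at hmin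
  rw [WithLp.inner_eq_inner_fst_add_mul_snd, WithLp.norm_sq_eq_norm_fst_sq_add_snd_sq,
    WithLp.sub_fst, WithLp.sub_snd]
  nlinarith [mul_le_mul_of_nonneg_left hz.2 hβ₀, mul_nonneg hc (sq_nonneg (z.snd - a.snd))]

end Epigraph

theorem statement_18_general {n : ℕ} (U : Set (EuclideanSpace ℝ (Fin n)))
    (hUo : IsOpen U) (hUc : Convex ℝ U)
    (K : ℝ) (hK : 0 < K) (f : EuclideanSpace ℝ (Fin n) → ℝ)
    (hf : LipschitzOnWith (Real.toNNReal K) f U) (r : ℝ) (hr : 0 < r)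
    (hext : SatisfiesExtSphere r
      {p : WithLp 2 (EuclideanSpace ℝ (Fin n) × ℝ) |
        (WithLp.equiv 2 (EuclideanSpace ℝ (Fin n) × ℝ) p).1 ∈ U ∧
          f (WithLp.equiv 2 (EuclideanSpace ℝ (Fin n) × ℝ) p).1 ≤
            (WithLp.equiv 2 (EuclideanSpace ℝ (Fin n) × ℝ) p).2}) :
    IsProxRegular (r / (1 + K ^ 2) ^ ((3 : ℝ) / 2))
      {p : WithLp 2 (EuclideanSpace ℝ (Fin n) × ℝ) |
        (WithLp.equiv 2 (EuclideanSpace ℝ (Fin n) × ℝ) p).1 ∈ U ∧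
          f (WithLp.equiv 2 (EuclideanSpace ℝ (Fin n) × ℝ) p).1 ≤
            (WithLp.equiv 2 (EuclideanSpace ℝ (Fin n) × ℝ) p).2} := by
  obtain ⟨g, hg, hfg⟩ := hf.extend_real
  have hepi : {p : WithLp 2 (EuclideanSpace ℝ (Fin n) × ℝ) |
      (WithLp.equiv 2 (EuclideanSpace ℝ (Fin n) × ℝ) p).1 ∈ U ∧
        f (WithLp.equiv 2 (EuclideanSpace ℝ (Fin n) × ℝ) p).1 ≤
          (WithLp.equiv 2 (EuclideanSpace ℝ (Fin n) × ℝ) p).2} = epiOn U g := by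
    ext p
    exact and_congr_right fun hp => by rw [hfg hp]; rfl
  rw [hepi] at hext ⊢
  have h := isProxRegular_epiOn hUo hUc hg hr hext
  rwa [Real.coe_toNNReal K hK.le] at h

theorem statement_18 {n : ℕ} (U : Set (EuclideanSpace ℝ (Fin n)))
    (hUo : IsOpen U) (hUc : Convex ℝ U) (hUb : Bornology.IsBounded U)
    (K : ℝ) (hK : 0 < K) (f : EuclideanSpace ℝ (Fin n) → ℝ)
    (hf : LipschitzOnWith (Real.toNNReal K) f U) (r : ℝ) (hr : 0 < r)
    (hext : SatisfiesExtSphere r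
      {p : WithLp 2 (EuclideanSpace ℝ (Fin n) × ℝ) |
        (WithLp.equiv 2 (EuclideanSpace ℝ (Fin n) × ℝ) p).1 ∈ U ∧
          f (WithLp.equiv 2 (EuclideanSpace ℝ (Fin n) × ℝ) p).1 ≤
            (WithLp.equiv 2 (EuclideanSpace ℝ (Fin n) × ℝ) p).2}) :
    IsProxRegular (r / (1 + K ^ 2) ^ ((3 : ℝ) / 2))
      {p : WithLp 2 (EuclideanSpace ℝ (Fin n) × ℝ) |
        (WithLp.equiv 2 (EuclideanSpace ℝ (Fin n) × ℝ) p).1 ∈ U ∧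
          f (WithLp.equiv 2 (EuclideanSpace ℝ (Fin n) × ℝ) p).1 ≤
            (WithLp.equiv 2 (EuclideanSpace ℝ (Fin n) × ℝ) p).2} :=
  statement_18_general U hUo hUc K hK f hf r hr hext
end

section
/- Let A ⊆ ℝⁿ be a nonempty closed set, let r > 0, and suppose A is r-strongly convex. Let a be a point in the frontier of A and let ζ ∈ N_A^P(a) be a unit vector. Then ‖(a − r·ζ) − y‖ ≤ r for all y ∈ A (so a ∈ far_A(a − r·ζ) and the farthest distance from a − r·ζ to A equals r), and for every t > r one has far_A(a − t·ζ) = {a}. -/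
open scoped RealInnerProductSpace

variable {E : Type*} [NormedAddCommGroup E] [InnerProductSpace ℝ E]

lemma ball_bulge {c : E} {r : ℝ} (hr : 0 < r) {x y : E}
    (hx : ‖x - c‖ ≤ r) (hy : ‖y - c‖ ≤ r)
    {s : ℝ} (hs0 : 0 ≤ s) (hs1 : s ≤ 1) {w : E} (hw : ‖w‖ ≤ 1) :
    ‖x + s • (y - x) + ((1 - s) * s * (‖y - x‖ ^ 2 / (2 * r))) • w - c‖ ≤ r := by
  have h1s : (0:ℝ) ≤ 1 - s := by linarith
  set q : ℝ := s * (1 - s) * ‖y - x‖ ^ 2 with hq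
  have hq0 : 0 ≤ q := by
    apply mul_nonneg (mul_nonneg hs0 h1s) (sq_nonneg _)
  have hD : ‖y - x‖ ≤ 2 * r := by
    have : y - x = (y - c) - (x - c) := by abel
    rw [this]
    calc ‖(y - c) - (x - c)‖ ≤ ‖y - c‖ + ‖x - c‖ := norm_sub_le _ _
      _ ≤ 2 * r := by linarith
  have hD2 : ‖y - x‖ ^ 2 ≤ (2 * r) ^ 2 := by nlinarith [norm_nonneg (y - x)]
  have hqr : q ≤ r ^ 2 := by
    nlinarith [sq_nonneg (2 * s - 1), sq_nonneg (‖y - x‖),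
      mul_nonneg (mul_nonneg hs0 h1s) (sq_nonneg ‖y - x‖)]
  have hA2 : ‖x - c‖ ^ 2 ≤ r ^ 2 := by nlinarith [norm_nonneg (x - c)]
  have hB2 : ‖y - c‖ ^ 2 ≤ r ^ 2 := by nlinarith [norm_nonneg (y - c)]
  have hDD : ‖y - x‖ ^ 2 = ‖y - c‖ ^ 2 - 2 * ⟪y - c, x - c⟫ + ‖x - c‖ ^ 2 := by
    have e : y - x = (y - c) - (x - c) := by abel
    rw [e, norm_sub_sq_real]
  have h1 : ‖x + s • (y - x) - c‖ ^ 2 ≤ r ^ 2 - q := by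
    have e : x + s • (y - x) - c = (1 - s) • (x - c) + s • (y - c) := by module
    rw [e, norm_add_sq_real, norm_smul, norm_smul, real_inner_smul_left, real_inner_smul_right,
      Real.norm_eq_abs, Real.norm_eq_abs, abs_of_nonneg h1s, abs_of_nonneg hs0]
    have key2 : ((1 - s) * ‖x - c‖) ^ 2 + 2 * ((1 - s) * (s * ⟪x - c, y - c⟫)) + (s * ‖y - c‖) ^ 2
        = (1 - s) * ‖x - c‖ ^ 2 + s * ‖y - c‖ ^ 2 - s * (1 - s) * ‖y - x‖ ^ 2 := by
      rw [hDD, real_inner_comm (x - c) (y - c)]; ring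
    rw [key2, hq]
    nlinarith [mul_nonneg hs0 (sub_nonneg.mpr hB2), mul_nonneg h1s (sub_nonneg.mpr hA2)]
  have h2 : ‖x + s • (y - x) - c‖ ≤ Real.sqrt (r ^ 2 - q) := by
    rw [show ‖x + s • (y - x) - c‖ = Real.sqrt (‖x + s • (y - x) - c‖ ^ 2) from
      (Real.sqrt_sq (norm_nonneg _)).symm]
    exact Real.sqrt_le_sqrt h1
  have hpos : 0 ≤ r - q / (2 * r) := by
    have : q / (2 * r) ≤ r / 2 := by
      rw [div_le_iff₀ (by positivity)]
      nlinarith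
    linarith
  have h3 : Real.sqrt (r ^ 2 - q) ≤ r - q / (2 * r) := by
    have hsq : (r - q / (2 * r)) ^ 2 = r ^ 2 - q + (q / (2 * r)) ^ 2 := by
      field_simp; ring
    calc Real.sqrt (r ^ 2 - q) ≤ Real.sqrt ((r - q / (2 * r)) ^ 2) := by
          apply Real.sqrt_le_sqrt; rw [hsq]; nlinarith [sq_nonneg (q / (2 * r))]
      _ = r - q / (2 * r) := Real.sqrt_sq hpos
  have hd : (1 - s) * s * (‖y - x‖ ^ 2 / (2 * r)) = q / (2 * r) := by
    rw [hq]; ring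
  calc ‖x + s • (y - x) + ((1 - s) * s * (‖y - x‖ ^ 2 / (2 * r))) • w - c‖
      = ‖(x + s • (y - x) - c) + ((1 - s) * s * (‖y - x‖ ^ 2 / (2 * r))) • w‖ := by
        congr 1; abel
    _ ≤ ‖x + s • (y - x) - c‖ + ‖((1 - s) * s * (‖y - x‖ ^ 2 / (2 * r))) • w‖ := norm_add_le _ _
    _ ≤ Real.sqrt (r ^ 2 - q) + q / (2 * r) := by
        apply add_le_add h2
        rw [norm_smul, Real.norm_eq_abs, hd, abs_of_nonneg (by positivity)]
        calc q / (2 * r) * ‖w‖ ≤ q / (2 * r) * 1 := by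
              apply mul_le_mul_of_nonneg_left hw (by positivity)
          _ = q / (2 * r) := mul_one _
    _ ≤ r := by linarith

lemma key_ineq {A : Set E} {r : ℝ} (hr : 0 < r) (hsc : IsStronglyConvex r A)
    {a : E} (haA : a ∈ A) {ζ : E} (hζ : ζ ∈ proxNormalCone A a) (hunit : ‖ζ‖ = 1) :
    ∀ y ∈ A, ⟪ζ, y - a⟫ ≤ -(‖y - a‖ ^ 2 / (2 * r)) := by
  obtain ⟨σ, hσ0, hσ⟩ := hζ
  obtain ⟨C, hCne, hAeq⟩ := hsc
  intro y hy
  set K : ℝ := ‖y - a‖ ^ 2 / (2 * r) with hK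
  have hK0 : 0 ≤ K := by positivity
  have hmem : ∀ s : ℝ, 0 ≤ s → s ≤ 1 → a + s • (y - a) + ((1 - s) * s * K) • ζ ∈ A := by
    intro s hs0 hs1
    rw [hAeq]
    refine Set.mem_iInter₂.mpr fun c hc => ?_
    have haB : ‖a - c‖ ≤ r := by
      have := Set.mem_iInter₂.mp (hAeq ▸ haA) c hc
      simpa [Metric.mem_closedBall, dist_eq_norm] using this
    have hyB : ‖y - c‖ ≤ r := by
      have := Set.mem_iInter₂.mp (hAeq ▸ hy) c hc
      simpa [Metric.mem_closedBall, dist_eq_norm] using this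
    have := ball_bulge hr haB hyB hs0 hs1 (le_of_eq hunit)
    simpa [Metric.mem_closedBall, dist_eq_norm, hK] using this
  have hineq : ∀ s : ℝ, 0 < s → s ≤ 1 →
      ⟪ζ, y - a⟫ + K ≤ s * (σ * (‖y - a‖ + K) ^ 2 + K) := by
    intro s hs0 hs1
    have hp := hσ _ (hmem s hs0.le hs1)
    have hpa : a + s • (y - a) + ((1 - s) * s * K) • ζ - a = s • (y - a) + ((1 - s) * s * K) • ζ := by
      abel
    rw [hpa] at hp
    have hinner : ⟪ζ, s • (y - a) + ((1 - s) * s * K) • ζ⟫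
        = s * ⟪ζ, y - a⟫ + (1 - s) * s * K := by
      rw [inner_add_right, real_inner_smul_right, real_inner_smul_right,
        real_inner_self_eq_norm_sq, hunit]
      ring
    have hnorm : ‖s • (y - a) + ((1 - s) * s * K) • ζ‖ ≤ s * (‖y - a‖ + K) := by
      calc ‖s • (y - a) + ((1 - s) * s * K) • ζ‖
          ≤ ‖s • (y - a)‖ + ‖((1 - s) * s * K) • ζ‖ := norm_add_le _ _
        _ = s * ‖y - a‖ + (1 - s) * s * K := by
            rw [norm_smul, norm_smul, Real.norm_eq_abs, Real.norm_eq_abs, hunit,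
              abs_of_nonneg hs0.le, abs_of_nonneg (mul_nonneg (mul_nonneg (by linarith) hs0.le) hK0 : (0:ℝ) ≤ (1 - s) * s * K)]
            ring
        _ ≤ s * (‖y - a‖ + K) := by nlinarith [mul_nonneg (mul_nonneg hs0.le hs0.le) hK0]
    have hn2 : ‖s • (y - a) + ((1 - s) * s * K) • ζ‖ ^ 2 ≤ (s * (‖y - a‖ + K)) ^ 2 := by
      have h0 : 0 ≤ ‖s • (y - a) + ((1 - s) * s * K) • ζ‖ := norm_nonneg _
      nlinarith
    rw [hinner] at hp
    have : s * ⟪ζ, y - a⟫ + (1 - s) * s * K ≤ σ * (s * (‖y - a‖ + K)) ^ 2 := by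
      calc s * ⟪ζ, y - a⟫ + (1 - s) * s * K ≤ σ * ‖s • (y - a) + ((1 - s) * s * K) • ζ‖ ^ 2 := hp
        _ ≤ σ * (s * (‖y - a‖ + K)) ^ 2 := by nlinarith
    nlinarith [this, mul_pos hs0 hs0]
  by_contra hcon
  push_neg at hcon
  set L : ℝ := ⟪ζ, y - a⟫ + K with hL
  have hL0 : 0 < L := by rw [hL]; linarith
  set Cst : ℝ := σ * (‖y - a‖ + K) ^ 2 + K with hCst
  have hC0 : 0 ≤ Cst := by positivity
  set s : ℝ := min 1 (L / (2 * (Cst + 1))) with hs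
  have hs0 : 0 < s := lt_min one_pos (by positivity)
  have hs1 : s ≤ 1 := min_le_left _ _
  have h := hineq s hs0 hs1
  have hs2 : s ≤ L / (2 * (Cst + 1)) := min_le_right _ _
  have h2 : s * Cst ≤ L / (2 * (Cst + 1)) * Cst := mul_le_mul_of_nonneg_right hs2 hC0
  have h3 : L / (2 * (Cst + 1)) * Cst < L := by
    rw [div_mul_eq_mul_div, div_lt_iff₀ (by positivity)]
    nlinarith
  exact absurd (h.trans h2) (not_le.mpr h3)

theorem statement_19 {n : ℕ} (A : Set (EuclideanSpace ℝ (Fin n)))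
    (hne : A.Nonempty) (hcl : IsClosed A) (r : ℝ) (hr : 0 < r)
    (hsc : IsStronglyConvex r A) (a : EuclideanSpace ℝ (Fin n))
    (ha : a ∈ frontier A) (ζ : EuclideanSpace ℝ (Fin n))
    (hζ : ζ ∈ proxNormalCone A a) (hunit : ‖ζ‖ = 1) :
    (∀ y ∈ A, ‖(a - r • ζ) - y‖ ≤ r) ∧
    a ∈ farPoints A (a - r • ζ) ∧
    IsGreatest ((fun y => ‖(a - r • ζ) - y‖) '' A) r ∧
    ∀ t : ℝ, r < t → farPoints A (a - t • ζ) = {a} := by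
  have haA : a ∈ A := by rw [← hcl.closure_eq]; exact frontier_subset_closure ha
  have key := key_ineq hr hsc haA hζ hunit
  have expand : ∀ (t : ℝ) (y : EuclideanSpace ℝ (Fin n)),
      ‖(a - t • ζ) - y‖ ^ 2 = ‖y - a‖ ^ 2 + 2 * t * ⟪ζ, y - a⟫ + t ^ 2 := by
    intro t y
    have e : (a - t • ζ) - y = -((y - a) + t • ζ) := by module
    rw [e, norm_neg, norm_add_sq_real, real_inner_smul_right, real_inner_comm,
      norm_smul, Real.norm_eq_abs, hunit, mul_one, sq_abs]
    ring
  have hkey2 : ∀ y ∈ A, 2 * r * ⟪ζ, y - a⟫ ≤ -‖y - a‖ ^ 2 := by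
    intro y hy
    have h2 := key y hy
    have h3 : 2 * r * ⟪ζ, y - a⟫ ≤ 2 * r * (-(‖y - a‖ ^ 2 / (2 * r))) :=
      mul_le_mul_of_nonneg_left h2 (by linarith)
    have h4 : 2 * r * (-(‖y - a‖ ^ 2 / (2 * r))) = -‖y - a‖ ^ 2 := by
      field_simp
    linarith
  have norm_at : ∀ t : ℝ, 0 ≤ t → ‖(a - t • ζ) - a‖ = t := by
    intro t ht
    have e : (a - t • ζ) - a = -(t • ζ) := by abel
    rw [e, norm_neg, norm_smul, Real.norm_eq_abs, hunit, mul_one, abs_of_nonneg ht]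
  have part1 : ∀ y ∈ A, ‖(a - r • ζ) - y‖ ≤ r := by
    intro y hy
    have h3 : ‖(a - r • ζ) - y‖ ^ 2 ≤ r ^ 2 := by
      rw [expand r y]
      have := hkey2 y hy
      linarith
    nlinarith [norm_nonneg ((a - r • ζ) - y)]
  refine ⟨part1, ⟨haA, fun b hb => ?_⟩, ⟨⟨a, haA, norm_at r hr.le⟩, ?_⟩, ?_⟩
  · rw [norm_at r hr.le]; exact part1 b hb
  · rintro v ⟨y, hy, rfl⟩
    exact part1 y hy
  · intro t ht
    have ht0 : 0 < t := hr.trans ht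
    have hfar : a ∈ farPoints A (a - t • ζ) := by
      refine ⟨haA, fun b' hb' => ?_⟩
      rw [norm_at t ht0.le]
      have h6 := hkey2 b' hb'
      have hsq : ‖(a - t • ζ) - b'‖ ^ 2 ≤ t ^ 2 := by
        rw [expand t b']
        nlinarith [mul_le_mul_of_nonneg_left h6 ht0.le, sq_nonneg ‖b' - a‖,
          mul_nonneg (le_of_lt (sub_pos.mpr ht)) (sq_nonneg ‖b' - a‖)]
      nlinarith [norm_nonneg ((a - t • ζ) - b')]
    ext b
    simp only [farPoints, Set.mem_setOf_eq, Set.mem_singleton_iff]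
    constructor
    · rintro ⟨hbA, hbfar⟩
      have hta : t ≤ ‖(a - t • ζ) - b‖ := by
        have := hbfar a haA
        rwa [norm_at t ht0.le] at this
      have hsq : t ^ 2 ≤ ‖(a - t • ζ) - b‖ ^ 2 := by nlinarith [norm_nonneg ((a - t • ζ) - b)]
      rw [expand t b] at hsq
      have h5 : 0 ≤ ‖b - a‖ ^ 2 + 2 * t * ⟪ζ, b - a⟫ := by linarith
      have h6 := hkey2 b hbA
      have h7 : ‖b - a‖ ^ 2 ≤ 0 := by
        nlinarith [mul_nonneg hr.le h5, mul_le_mul_of_nonneg_left h6 ht0.le,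
          sq_nonneg ‖b - a‖]
      have h8 : ‖b - a‖ = 0 := by nlinarith [norm_nonneg (b - a)]
      have : b - a = 0 := norm_eq_zero.mp h8
      exact sub_eq_zero.mp this
    · rintro rfl
      exact hfar
end
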